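/- arXiv:2509.03004 — 6 statements merged into one kernel-verified Lean document; each statement's English description precedes it below -/
import Mathlib

section
/- Let M and M' be two quantum hidden Markov models over the same finite alphabet X, with memory dimensions d and d', generating word-probability functions P and P' respectively. Let Ω_h and Ω_h' be sufficient history wordlists and Ω_f and Ω_f' be sufficient future wordlists for M and M' respectively. Then P(w) = P'(w) for every word w ∈ X* if and only if all three of the following hold: (1) P(w_f | w_h) = P'(w_f | w_h) for all w_h ∈ Ω_h ∪ Ω_h' and all w_f ∈ Ω_f ∪ Ω_f'; (2) P(x w_f | w_h) = P'(x w_f | w_h) for all x ∈ X, all w_h ∈ Ω_h ∪ Ω_h', and all w_f ∈ Ω_f ∪ Ω_f'; and (3) P(w_f) = P'(w_f) for all w_f ∈ Ω_f ∪ Ω_f'. -/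
open Matrix
open scoped ComplexOrder

noncomputable section

/-- A quantum hidden Markov model over alphabet `X` with memory dimension `d`:
a density matrix `σ0` together with Kraus operators `K x y` (with trashed
alphabet `Fin m`) summing to a trace-preserving map. -/
structure QHMM (X : Type) [Fintype X] (d : ℕ) where
  m : ℕ
  σ0 : Matrix (Fin d) (Fin d) ℂ
  K : X → Fin m → Matrix (Fin d) (Fin d) ℂ
  σ0_posSemidef : σ0.PosSemidef
  σ0_trace : σ0.trace = 1
  kraus_normalized : ∑ x : X, ∑ y : Fin m, (K x y)ᴴ * K x y = 1

namespace QHMM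

variable {X : Type} [Fintype X] {d : ℕ}

/-- The completely positive map associated with symbol `x`. -/
def A (M : QHMM X d) (x : X) (ρ : Matrix (Fin d) (Fin d) ℂ) : Matrix (Fin d) (Fin d) ℂ :=
  ∑ y : Fin M.m, M.K x y * ρ * (M.K x y)ᴴ

/-- The map associated with a word: `A_w = A_{x_{L-1}} ∘ ⋯ ∘ A_{x_0}` (empty word ↦ identity). -/
def Aw (M : QHMM X d) (w : List X) (ρ : Matrix (Fin d) (Fin d) ℂ) : Matrix (Fin d) (Fin d) ℂ :=
  w.foldl (fun σ x => M.A x σ) ρ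

/-- The word-probability function of the QHMM: `P(w) = tr[A_w(σ0)]`. -/
def P (M : QHMM X d) (w : List X) : ℝ := (M.Aw w M.σ0).trace.re

/-- Conditional probability `P(w_f | w_h) = tr[A_{w_f}(A_{w_h}(σ0))]/tr[A_{w_h}(σ0)]`
when `tr[A_{w_h}(σ0)] > 0`, and `0` otherwise. -/
def condP (M : QHMM X d) (wf wh : List X) : ℝ :=
  if 0 < (M.Aw wh M.σ0).trace.re then
    (M.Aw wf (M.Aw wh M.σ0)).trace.re / (M.Aw wh M.σ0).trace.re
  else 0

/-- The history space: real span of all observation-induced memory states. -/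
def historySpace (M : QHMM X d) : Submodule ℝ (Matrix (Fin d) (Fin d) ℂ) :=
  Submodule.span ℝ {ρ | ∃ w : List X, ρ = M.Aw w M.σ0}

/-- The linear functional `ρ ↦ tr[A_w(ρ)]` induced by the future word `w`. -/
def futureFunctional (M : QHMM X d) (w : List X) : Matrix (Fin d) (Fin d) ℂ → ℂ :=
  fun ρ => (M.Aw w ρ).trace

/-- The future space: real span of the future-word functionals. -/
def futureSpace (M : QHMM X d) : Submodule ℝ (Matrix (Fin d) (Fin d) ℂ → ℂ) :=
  Submodule.span ℝ {f | ∃ w : List X, f = M.futureFunctional w}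

/-- The inert history: elements of the history space annihilated by every future functional. -/
def inertHistorySet (M : QHMM X d) : Set (Matrix (Fin d) (Fin d) ℂ) :=
  {h | h ∈ M.historySpace ∧ ∀ w : List X, (M.Aw w h).trace = 0}

/-- The inert future: functionals in the future space annihilating the whole history space. -/
def inertFutureSet (M : QHMM X d) : Set (Matrix (Fin d) (Fin d) ℂ → ℂ) :=
  {f | f ∈ M.futureSpace ∧ ∀ h ∈ M.historySpace, f h = 0}

/-- A history wordlist is sufficient if the induced states, together with the inert
history, span the history space. -/
def SufficientHistory (M : QHMM X d) (Ω : Set (List X)) : Prop :=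
  Submodule.span ℝ ({ρ | ∃ w ∈ Ω, ρ = M.Aw w M.σ0} ∪ M.inertHistorySet) = M.historySpace

/-- A future wordlist is sufficient if the induced functionals, together with the inert
future, span the future space. -/
def SufficientFuture (M : QHMM X d) (Ω : Set (List X)) : Prop :=
  Submodule.span ℝ ({f | ∃ w ∈ Ω, f = M.futureFunctional w} ∪ M.inertFutureSet) = M.futureSpace

end QHMM

/-- A generalized hidden Markov model over alphabet `X` with latent dimension `n`. -/
structure GHMM (X : Type) [Fintype X] (n : ℕ) where
  η0 : Fin n → ℝ
  T : X → Matrix (Fin n) (Fin n) ℝ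
  τ : Fin n → ℝ
  fixed : (∑ x : X, T x) *ᵥ τ = τ
  normalized : η0 ⬝ᵥ τ = 1

namespace GHMM

variable {X : Type} [Fintype X] {n : ℕ}

/-- The word-probability function of the GHMM: `P(w) = η₀ T^(x₀)⋯T^(x_{L-1}) τ`. -/
def P (G : GHMM X n) (w : List X) : ℝ := G.η0 ⬝ᵥ ((w.map G.T).prod *ᵥ G.τ)

end GHMM

/-- The Hankel rank of a word function `P`: the real dimension of the span of its
left-translates `v ↦ P (u ++ v)`. -/
def hankelRank {X : Type} (P : List X → ℝ) : Cardinal :=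
  Module.rank ℝ ↥(Submodule.span ℝ {f : List X → ℝ | ∃ u : List X, f = fun v => P (u ++ v)})



namespace QHMM

variable {X : Type} [Fintype X] {d d' : ℕ}

lemma Aw_nil (M : QHMM X d) (ρ : Matrix (Fin d) (Fin d) ℂ) : M.Aw [] ρ = ρ := rfl

lemma Aw_cons (M : QHMM X d) (x : X) (w : List X) (ρ : Matrix (Fin d) (Fin d) ℂ) :
    M.Aw (x :: w) ρ = M.Aw w (M.A x ρ) := rfl

lemma Aw_append (M : QHMM X d) (u v : List X) (ρ : Matrix (Fin d) (Fin d) ℂ) :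
    M.Aw (u ++ v) ρ = M.Aw v (M.Aw u ρ) :=
  List.foldl_append

lemma A_add (M : QHMM X d) (x : X) (ρ σ : Matrix (Fin d) (Fin d) ℂ) :
    M.A x (ρ + σ) = M.A x ρ + M.A x σ := by
  simp [QHMM.A, Matrix.mul_add, Matrix.add_mul, Finset.sum_add_distrib]

lemma A_sub (M : QHMM X d) (x : X) (ρ σ : Matrix (Fin d) (Fin d) ℂ) :
    M.A x (ρ - σ) = M.A x ρ - M.A x σ := by
  simp [QHMM.A, Matrix.mul_sub, Matrix.sub_mul, Finset.sum_sub_distrib]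

lemma A_smul (M : QHMM X d) (x : X) (c : ℝ) (ρ : Matrix (Fin d) (Fin d) ℂ) :
    M.A x (c • ρ) = c • M.A x ρ := by
  simp [QHMM.A, Matrix.mul_smul, Matrix.smul_mul, Finset.smul_sum]

lemma A_zero (M : QHMM X d) (x : X) : M.A x 0 = 0 := by
  simp [QHMM.A]

lemma Aw_add (M : QHMM X d) (w : List X) :
    ∀ ρ σ : Matrix (Fin d) (Fin d) ℂ, M.Aw w (ρ + σ) = M.Aw w ρ + M.Aw w σ := by
  induction w with
  | nil => intro ρ σ; rfl
  | cons x w ih => intro ρ σ; rw [Aw_cons, Aw_cons, Aw_cons, A_add]; exact ih _ _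

lemma Aw_sub (M : QHMM X d) (w : List X) :
    ∀ ρ σ : Matrix (Fin d) (Fin d) ℂ, M.Aw w (ρ - σ) = M.Aw w ρ - M.Aw w σ := by
  induction w with
  | nil => intro ρ σ; rfl
  | cons x w ih => intro ρ σ; rw [Aw_cons, Aw_cons, Aw_cons, A_sub]; exact ih _ _

lemma Aw_smul (M : QHMM X d) (w : List X) (c : ℝ) :
    ∀ ρ : Matrix (Fin d) (Fin d) ℂ, M.Aw w (c • ρ) = c • M.Aw w ρ := by
  induction w with
  | nil => intro ρ; rfl
  | cons x w ih => intro ρ; rw [Aw_cons, Aw_cons, A_smul]; exact ih _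

lemma Aw_zero (M : QHMM X d) (w : List X) : M.Aw w 0 = 0 := by
  induction w with
  | nil => rfl
  | cons x w ih => rw [Aw_cons, A_zero]; exact ih

lemma posSemidef_A (M : QHMM X d) (x : X) {ρ : Matrix (Fin d) (Fin d) ℂ}
    (h : ρ.PosSemidef) : (M.A x ρ).PosSemidef := by
  refine Finset.sum_induction _ _ (fun a b ha hb => ha.add hb) Matrix.PosSemidef.zero ?_
  exact fun y _ => h.mul_mul_conjTranspose_same _

lemma posSemidef_Aw (M : QHMM X d) (w : List X) :
    ∀ {ρ : Matrix (Fin d) (Fin d) ℂ}, ρ.PosSemidef → (M.Aw w ρ).PosSemidef := by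
  induction w with
  | nil => intro ρ h; exact h
  | cons x w ih => intro ρ h; rw [Aw_cons]; exact ih (M.posSemidef_A x h)

lemma psd_trace_nonneg {n : ℕ} {A : Matrix (Fin n) (Fin n) ℂ} (hA : A.PosSemidef) :
    0 ≤ A.trace := by
  rw [Matrix.trace]
  refine Finset.sum_nonneg fun i _ => ?_
  exact hA.diag_nonneg

lemma psd_trace_re {n : ℕ} {A : Matrix (Fin n) (Fin n) ℂ} (hA : A.PosSemidef) :
    A.trace = (A.trace.re : ℂ) := by
  have h := psd_trace_nonneg hA
  rw [Complex.nonneg_iff] at h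
  exact Complex.ext (by simp) (by simp [← h.2])

lemma psd_trace_re_nonneg {n : ℕ} {A : Matrix (Fin n) (Fin n) ℂ} (hA : A.PosSemidef) :
    0 ≤ A.trace.re :=
  (Complex.nonneg_iff.mp (psd_trace_nonneg hA)).1

lemma psd_eq_zero_of_trace {n : ℕ} {A : Matrix (Fin n) (Fin n) ℂ} (hA : A.PosSemidef)
    (h : A.trace = 0) : A = 0 := by
  exact hA.trace_eq_zero_iff.mp h

lemma mem_history (M : QHMM X d) (w : List X) : M.Aw w M.σ0 ∈ M.historySpace :=
  Submodule.subset_span ⟨w, rfl⟩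

/-- If a member of the history space is annihilated by all functionals of a sufficient
future wordlist, it is annihilated by all future functionals. -/
lemma future_ext (M : QHMM X d) {Ω : Set (List X)} (hΩ : M.SufficientFuture Ω)
    {δ : Matrix (Fin d) (Fin d) ℂ} (hδ : δ ∈ M.historySpace)
    (h0 : ∀ v ∈ Ω, (M.Aw v δ).trace = 0) (v : List X) : (M.Aw v δ).trace = 0 := by
  have hv : M.futureFunctional v ∈ M.futureSpace := Submodule.subset_span ⟨v, rfl⟩
  rw [← hΩ] at hv
  have hle : Submodule.span ℝ ({f | ∃ w ∈ Ω, f = M.futureFunctional w} ∪ M.inertFutureSet)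
      ≤ LinearMap.ker (LinearMap.proj (R := ℝ) (φ := fun _ : Matrix (Fin d) (Fin d) ℂ => ℂ) δ) := by
    rw [Submodule.span_le]
    rintro f (⟨w, hw, rfl⟩ | hf)
    · exact LinearMap.mem_ker.mpr (h0 w hw)
    · exact LinearMap.mem_ker.mpr (hf.2 δ hδ)
  exact hle hv

/-- The complex trace of `A_w(σ0)` is the (real) probability `P(w)`. -/
lemma trace_eq_P (M : QHMM X d) (w : List X) :
    (M.Aw w M.σ0).trace = (M.P w : ℂ) :=
  psd_trace_re (M.posSemidef_Aw w M.σ0_posSemidef)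

lemma P_nonneg (M : QHMM X d) (w : List X) : 0 ≤ M.P w :=
  psd_trace_re_nonneg (M.posSemidef_Aw w M.σ0_posSemidef)

lemma trace_append_eq_P (M : QHMM X d) (u v : List X) :
    (M.Aw v (M.Aw u M.σ0)).trace = (M.P (u ++ v) : ℂ) := by
  rw [← Aw_append, trace_eq_P]

lemma condP_eq (M : QHMM X d) (wf wh : List X) :
    M.condP wf wh = if 0 < M.P wh then M.P (wh ++ wf) / M.P wh else 0 := by
  rw [condP]
  have h1 : (M.Aw wh M.σ0).trace.re = M.P wh := rfl
  have h2 : (M.Aw wf (M.Aw wh M.σ0)).trace.re = M.P (wh ++ wf) := by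
    rw [trace_append_eq_P]; simp
  rw [h1, h2]

end QHMM

namespace QHMM

variable {X : Type} [Fintype X]

/-- If the conditional probabilities on a sufficient future wordlist agree and
`P(u) > 0`, then `P'(u) > 0`. -/
lemma pos_of_pos {d d' : ℕ} (M : QHMM X d) (M' : QHMM X d')
    {Ωf Ωc : Set (List X)} (hΩf : M.SufficientFuture Ωf) (hsub : Ωf ⊆ Ωc) {u : List X}
    (h1 : ∀ v ∈ Ωc, M.condP v u = M'.condP v u)
    (hu : 0 < M.P u) : 0 < M'.P u := by
  by_contra hneg
  have h0 : ∀ v ∈ Ωf, (M.Aw v (M.Aw u M.σ0)).trace = 0 := by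
    intro v hv
    have hc := h1 v (hsub hv)
    rw [condP_eq, condP_eq, if_pos hu, if_neg hneg] at hc
    have hnum : M.P (u ++ v) = 0 := by
      rcases div_eq_zero_iff.mp hc with h | h
      · exact h
      · exact absurd h (ne_of_gt hu)
    rw [trace_append_eq_P, hnum]
    simp
  have hfin := M.future_ext hΩf (M.mem_history u) h0 []
  rw [Aw_nil, trace_eq_P] at hfin
  have : M.P u = 0 := by exact_mod_cast hfin
  exact absurd this (ne_of_gt hu)

/-- Partner-state construction: every element of the history space of `M` has a partner
in the history space of `M'` matching all the wordlist traces and the total trace. -/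
lemma exists_partner {d d' : ℕ} (M : QHMM X d) (M' : QHMM X d')
    {Ωh Ωc : Set (List X)} (hΩh : M.SufficientHistory Ωh)
    (hpos : ∀ u ∈ Ωh, 0 < M.P u → 0 < M'.P u)
    (h1 : ∀ u ∈ Ωh, ∀ v ∈ Ωc, M.condP v u = M'.condP v u)
    (h2 : ∀ x : X, ∀ u ∈ Ωh, ∀ v ∈ Ωc, M.condP (x :: v) u = M'.condP (x :: v) u)
    {ρ : Matrix (Fin d) (Fin d) ℂ} (hρ : ρ ∈ M.historySpace) :
    ∃ ρ' : Matrix (Fin d') (Fin d') ℂ, ρ' ∈ M'.historySpace ∧ ρ'.trace = ρ.trace ∧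
      (∀ v ∈ Ωc, (M'.Aw v ρ').trace = (M.Aw v ρ).trace) ∧
      (∀ x : X, ∀ v ∈ Ωc, (M'.Aw (x :: v) ρ').trace = (M.Aw (x :: v) ρ).trace) := by
  rw [← hΩh] at hρ
  induction hρ using Submodule.span_induction with
  | mem ρ hmem =>
    rcases hmem with ⟨u, hu, rfl⟩ | hinert
    · -- generator from the wordlist
      by_cases hu0 : 0 < M.P u
      · have hu0' := hpos u hu hu0
        refine ⟨(M.P u / M'.P u) • M'.Aw u M'.σ0,
          Submodule.smul_mem _ _ (M'.mem_history u), ?_, ?_, ?_⟩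
        · rw [Matrix.trace_smul, trace_eq_P, trace_eq_P]
          rw [Complex.real_smul]
          rw [← Complex.ofReal_mul]
          rw [div_mul_cancel₀ _ (ne_of_gt hu0')]
        · intro v hv
          rw [Aw_smul, Matrix.trace_smul, trace_append_eq_P, trace_append_eq_P,
            Complex.real_smul, ← Complex.ofReal_mul]
          norm_cast
          have hc := h1 u hu v hv
          rw [condP_eq, condP_eq, if_pos hu0, if_pos hu0'] at hc
          field_simp at hc
          field_simp
          linarith [hc]
        · intro x v hv
          rw [Aw_smul, Matrix.trace_smul, trace_append_eq_P, trace_append_eq_P,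
            Complex.real_smul, ← Complex.ofReal_mul]
          norm_cast
          have hc := h2 x u hu v hv
          rw [condP_eq, condP_eq, if_pos hu0, if_pos hu0'] at hc
          field_simp at hc
          field_simp
          linarith [hc]
      · -- zero-probability generator: it is the zero matrix
        have hP0 : M.P u = 0 := le_antisymm (not_lt.mp hu0) (M.P_nonneg u)
        have hz : M.Aw u M.σ0 = 0 := by
          apply psd_eq_zero_of_trace (M.posSemidef_Aw u M.σ0_posSemidef)
          rw [trace_eq_P, hP0]; simp
        refine ⟨0, Submodule.zero_mem _, ?_, ?_, ?_⟩
        · rw [hz]; simp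
        · intro v _; rw [hz, Aw_zero, Aw_zero]; simp
        · intro x v _; rw [hz, Aw_zero, Aw_zero]; simp
    · -- inert history element
      refine ⟨0, Submodule.zero_mem _, ?_, ?_, ?_⟩
      · have := hinert.2 []
        rw [Aw_nil] at this
        rw [this]; simp
      · intro v _; rw [hinert.2 v, Aw_zero]; simp
      · intro x v _; rw [hinert.2 (x :: v), Aw_zero]; simp
  | zero =>
    exact ⟨0, Submodule.zero_mem _, by simp, fun v _ => by rw [Aw_zero, Aw_zero]; simp,
      fun x v _ => by rw [Aw_zero, Aw_zero]; simp⟩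
  | add ρ σ hρ hσ ihρ ihσ =>
    obtain ⟨ρ', hρ'm, hρ't, hρ'v, hρ'xv⟩ := ihρ
    obtain ⟨σ', hσ'm, hσ't, hσ'v, hσ'xv⟩ := ihσ
    refine ⟨ρ' + σ', Submodule.add_mem _ hρ'm hσ'm, ?_, ?_, ?_⟩
    · rw [Matrix.trace_add, Matrix.trace_add, hρ't, hσ't]
    · intro v hv
      rw [Aw_add, Aw_add, Matrix.trace_add, Matrix.trace_add, hρ'v v hv, hσ'v v hv]
    · intro x v hv
      rw [Aw_add, Aw_add, Matrix.trace_add, Matrix.trace_add, hρ'xv x v hv, hσ'xv x v hv]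
  | smul c ρ hρ ihρ =>
    obtain ⟨ρ', hρ'm, hρ't, hρ'v, hρ'xv⟩ := ihρ
    refine ⟨c • ρ', Submodule.smul_mem _ _ hρ'm, ?_, ?_, ?_⟩
    · rw [Matrix.trace_smul, Matrix.trace_smul, hρ't]
    · intro v hv
      rw [Aw_smul, Aw_smul, Matrix.trace_smul, Matrix.trace_smul, hρ'v v hv]
    · intro x v hv
      rw [Aw_smul, Aw_smul, Matrix.trace_smul, Matrix.trace_smul, hρ'xv x v hv]

end QHMM

namespace QHMM

variable {X : Type} [Fintype X]

/-- The key induction step: if the traces of `M` and `M'` agree on `w` extended by the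
combined future wordlist, then they agree on `w` itself and on `w` extended by a letter
and a wordlist element. -/
lemma step {d d' : ℕ} (M : QHMM X d) (M' : QHMM X d')
    {Ωh Ωc Ωf' : Set (List X)} (hΩh : M.SufficientHistory Ωh)
    (hΩf' : M'.SufficientFuture Ωf') (hsub' : Ωf' ⊆ Ωc)
    (hpos : ∀ u ∈ Ωh, 0 < M.P u → 0 < M'.P u)
    (h1 : ∀ u ∈ Ωh, ∀ v ∈ Ωc, M.condP v u = M'.condP v u)
    (h2 : ∀ x : X, ∀ u ∈ Ωh, ∀ v ∈ Ωc, M.condP (x :: v) u = M'.condP (x :: v) u)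
    (w : List X)
    (hQ : ∀ v ∈ Ωc, (M.Aw (w ++ v) M.σ0).trace = (M'.Aw (w ++ v) M'.σ0).trace) :
    (M.Aw w M.σ0).trace = (M'.Aw w M'.σ0).trace ∧
      ∀ x : X, ∀ v ∈ Ωc,
        (M.Aw (w ++ x :: v) M.σ0).trace = (M'.Aw (w ++ x :: v) M'.σ0).trace := by
  obtain ⟨z, hzm, hzt, hzv, hzxv⟩ := exists_partner M M' hΩh hpos h1 h2 (M.mem_history w)
  have hδm : z - M'.Aw w M'.σ0 ∈ M'.historySpace :=
    Submodule.sub_mem _ hzm (M'.mem_history w)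
  have h0 : ∀ v ∈ Ωf', (M'.Aw v (z - M'.Aw w M'.σ0)).trace = 0 := by
    intro v hv
    rw [Aw_sub, Matrix.trace_sub, hzv v (hsub' hv), ← Aw_append, ← Aw_append,
      hQ v (hsub' hv), sub_self]
  have hz_all : ∀ v : List X, (M'.Aw v z).trace = (M'.Aw v (M'.Aw w M'.σ0)).trace := by
    intro v
    have := M'.future_ext hΩf' hδm h0 v
    rw [Aw_sub, Matrix.trace_sub, sub_eq_zero] at this
    exact this
  constructor
  · have h := hz_all []
    rw [Aw_nil, Aw_nil] at h
    rw [← hzt, h]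
  · intro x v hv
    rw [Aw_append, Aw_append, ← hzxv x v hv, hz_all (x :: v)]

end QHMM


/-- Identifiability of QHMMs via sufficient wordlists (Theorem 1 of the paper). -/
theorem qhmm_identifiability {X : Type} [Fintype X] {d d' : ℕ}
    (M : QHMM X d) (M' : QHMM X d')
    (Ωh Ωf Ωh' Ωf' : Set (List X))
    (hΩh : M.SufficientHistory Ωh) (hΩf : M.SufficientFuture Ωf)
    (hΩh' : M'.SufficientHistory Ωh') (hΩf' : M'.SufficientFuture Ωf') :
    (∀ w : List X, M.P w = M'.P w) ↔
      ((∀ wh ∈ Ωh ∪ Ωh', ∀ wf ∈ Ωf ∪ Ωf', M.condP wf wh = M'.condP wf wh) ∧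
       (∀ x : X, ∀ wh ∈ Ωh ∪ Ωh', ∀ wf ∈ Ωf ∪ Ωf',
          M.condP (x :: wf) wh = M'.condP (x :: wf) wh) ∧
       (∀ wf ∈ Ωf ∪ Ωf', M.P wf = M'.P wf)) := by
  constructor
  · intro hP
    have hcond : ∀ wf wh : List X, M.condP wf wh = M'.condP wf wh := by
      intro wf wh
      rw [QHMM.condP_eq, QHMM.condP_eq, hP wh, hP (wh ++ wf)]
    exact ⟨fun wh _ wf _ => hcond wf wh, fun x wh _ wf _ => hcond (x :: wf) wh,
      fun wf _ => hP wf⟩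
  · rintro ⟨h1, h2, h3⟩ w
    have h1L : ∀ u ∈ Ωh, ∀ v ∈ Ωf ∪ Ωf', M.condP v u = M'.condP v u :=
      fun u hu v hv => h1 u (Set.mem_union_left _ hu) v hv
    have h2L : ∀ x : X, ∀ u ∈ Ωh, ∀ v ∈ Ωf ∪ Ωf', M.condP (x :: v) u = M'.condP (x :: v) u :=
      fun x u hu v hv => h2 x u (Set.mem_union_left _ hu) v hv
    have hposL : ∀ u ∈ Ωh, 0 < M.P u → 0 < M'.P u :=
      fun u hu => QHMM.pos_of_pos M M' hΩf Set.subset_union_left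
        (fun v hv => h1 u (Set.mem_union_left _ hu) v hv)
    have Q : ∀ w : List X, ∀ v ∈ Ωf ∪ Ωf',
        (M.Aw (w ++ v) M.σ0).trace = (M'.Aw (w ++ v) M'.σ0).trace := by
      intro w
      induction w using List.reverseRecOn with
      | nil =>
        intro v hv
        rw [QHMM.trace_eq_P, QHMM.trace_eq_P, List.nil_append, h3 v hv]
      | append_singleton w x ih =>
        intro v hv
        have hstep := QHMM.step M M' hΩh hΩf' Set.subset_union_right hposL h1L h2L w ih
        have h := hstep.2 x v hv
        rwa [← List.singleton_append, ← List.append_assoc] at h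
    have hfinal := (QHMM.step M M' hΩh hΩf' Set.subset_union_right hposL h1L h2L w (Q w)).1
    rw [QHMM.trace_eq_P, QHMM.trace_eq_P] at hfinal
    exact_mod_cast hfinal



end
end

section
/- Let M and M' be two quantum hidden Markov models over the same finite alphabet X, with memory dimensions d and d', generating word-probability functions P and P' respectively, and let d_max = max{d, d'}. Then P(w) = P'(w) for every word w ∈ X* if and only if P(w) = P'(w) for every word w ∈ X* of length exactly 2·d_max² − 1. -/
open Matrix
open scoped ComplexOrder

noncomputable section

namespace QHMMAux

variable {X : Type} [Fintype X] {d d' : ℕ}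

lemma Aw_nil (M : QHMM X d) (ρ : Matrix (Fin d) (Fin d) ℂ) : M.Aw [] ρ = ρ := rfl

lemma Aw_cons (M : QHMM X d) (x : X) (w : List X) (ρ : Matrix (Fin d) (Fin d) ℂ) :
    M.Aw (x :: w) ρ = M.Aw w (M.A x ρ) := rfl

lemma Aw_append_singleton (M : QHMM X d) (w : List X) (x : X) (ρ : Matrix (Fin d) (Fin d) ℂ) :
    M.Aw (w ++ [x]) ρ = M.A x (M.Aw w ρ) := by
  simp [QHMM.Aw, List.foldl_append]

lemma A_map_add (M : QHMM X d) (x : X) (ρ σ : Matrix (Fin d) (Fin d) ℂ) :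
    M.A x (ρ + σ) = M.A x ρ + M.A x σ := by
  simp [QHMM.A, Matrix.mul_add, Matrix.add_mul, Finset.sum_add_distrib]

lemma A_map_smul (M : QHMM X d) (x : X) (c : ℝ) (ρ : Matrix (Fin d) (Fin d) ℂ) :
    M.A x (c • ρ) = c • M.A x ρ := by
  simp [QHMM.A, Matrix.mul_smul, Matrix.smul_mul, Finset.smul_sum]

lemma trace_A_sum (M : QHMM X d) (ρ : Matrix (Fin d) (Fin d) ℂ) :
    ∑ x : X, (M.A x ρ).trace = ρ.trace := by
  have h : ∀ x y, (M.K x y * ρ * (M.K x y)ᴴ).trace = (((M.K x y)ᴴ * M.K x y) * ρ).trace := by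
    intro x y
    rw [Matrix.trace_mul_cycle]
  simp only [QHMM.A, Matrix.trace_sum, h]
  calc ∑ x : X, ∑ y : Fin M.m, ((M.K x y)ᴴ * M.K x y * ρ).trace
      = ((∑ x : X, ∑ y : Fin M.m, (M.K x y)ᴴ * M.K x y) * ρ).trace := by
        simp [Finset.sum_mul, Matrix.trace_sum]
    _ = ρ.trace := by rw [M.kraus_normalized, one_mul]

lemma A_isHermitian (M : QHMM X d) (x : X) {ρ : Matrix (Fin d) (Fin d) ℂ}
    (h : ρ.IsHermitian) : (M.A x ρ).IsHermitian := by
  have : (M.A x ρ)ᴴ = M.A x ρ := by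
    unfold QHMM.A
    rw [Matrix.conjTranspose_sum]
    exact Finset.sum_congr rfl fun y _ => by
      simp [Matrix.conjTranspose_mul, Matrix.mul_assoc, h.eq]
  exact this

lemma Aw_isHermitian (M : QHMM X d) (w : List X) {ρ : Matrix (Fin d) (Fin d) ℂ}
    (h : ρ.IsHermitian) : (M.Aw w ρ).IsHermitian := by
  induction w generalizing ρ with
  | nil => exact h
  | cons x w ih => exact ih (A_isHermitian M x h)

lemma P_sum (M : QHMM X d) (w : List X) : M.P w = ∑ x : X, M.P (w ++ [x]) := by
  unfold QHMM.P
  rw [← Complex.re_sum]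
  congr 1
  rw [← trace_A_sum M (M.Aw w M.σ0)]
  exact Finset.sum_congr rfl fun x _ => by rw [Aw_append_singleton]


section Joint

variable {X : Type} [Fintype X] {d d' : ℕ}

/-- `A x` as a real-linear map. -/
def Alin (M : QHMM X d) (x : X) :
    Matrix (Fin d) (Fin d) ℂ →ₗ[ℝ] Matrix (Fin d) (Fin d) ℂ where
  toFun := M.A x
  map_add' := A_map_add M x
  map_smul' := A_map_smul M x

abbrev JS (d d' : ℕ) := Matrix (Fin d) (Fin d) ℂ × Matrix (Fin d') (Fin d') ℂ

def jstate (M : QHMM X d) (M' : QHMM X d') (w : List X) : JS d d' :=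
  (M.Aw w M.σ0, M'.Aw w M'.σ0)

def jmap (M : QHMM X d) (M' : QHMM X d') (x : X) : JS d d' →ₗ[ℝ] JS d d' :=
  (Alin M x).prodMap (Alin M' x)

lemma jstate_append (M : QHMM X d) (M' : QHMM X d') (w : List X) (x : X) :
    jstate M M' (w ++ [x]) = jmap M M' x (jstate M M' w) := by
  simp [jstate, jmap, Aw_append_singleton, Alin, LinearMap.prodMap_apply]

/-- The difference-of-traces functional. -/
def φd (d d' : ℕ) : JS d d' →ₗ[ℝ] ℝ where
  toFun p := (p.1.trace).re - (p.2.trace).re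
  map_add' := by intro p q; simp [Matrix.trace_add]; ring
  map_smul' := by
    intro c p
    simp [Matrix.trace_smul, Complex.smul_re, smul_eq_mul]
    ring

lemma φd_jstate (M : QHMM X d) (M' : QHMM X d') (w : List X) :
    φd d d' (jstate M M' w) = M.P w - M'.P w := rfl

/-- Real coordinates of a Hermitian matrix. -/
def coord (n : ℕ) : Matrix (Fin n) (Fin n) ℂ →ₗ[ℝ] (Fin n × Fin n → ℝ) where
  toFun ρ := fun p => if p.1 ≤ p.2 then (ρ p.1 p.2).re else (ρ p.1 p.2).im
  map_add' := by
    intro ρ σ; funext p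
    by_cases h : p.1 ≤ p.2 <;> simp [h]
  map_smul' := by
    intro c ρ; funext p
    by_cases h : p.1 ≤ p.2 <;> simp [h, Complex.smul_re, Complex.smul_im]

lemma coord_inj {n : ℕ} {ρ : Matrix (Fin n) (Fin n) ℂ} (h : ρ.IsHermitian)
    (h0 : coord n ρ = 0) : ρ = 0 := by
  have key : ∀ i j : Fin n, i ≤ j → ρ i j = 0 := by
    intro i j hij
    have hre : (ρ i j).re = 0 := by
      have := congrFun h0 (i, j); simpa [coord, hij] using this
    have him : (ρ i j).im = 0 := by
      rcases eq_or_lt_of_le hij with rfl | hlt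
      · have hs := h.apply i i
        have : (starRingEnd ℂ) (ρ i i) = ρ i i := hs
        have := congrArg Complex.im this
        simp at this
        linarith [this]
      · have h2 : (ρ j i).im = 0 := by
          have := congrFun h0 (j, i)
          simpa [coord, not_le.mpr hlt] using this
        have h3 : star (ρ j i) = ρ i j := h.apply i j
        rw [← h3]
        simp [Complex.star_def, h2]
    exact Complex.ext hre him
  ext i j
  rcases le_total i j with hij | hji
  · simpa using key i j hij
  · have h3 : star (ρ j i) = ρ i j := h.apply i j
    rw [show ρ i j = star (ρ j i) from h3.symm, key j i hji]
    simp

/-- Joint coordinates. -/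
def jcoord (d d' : ℕ) : JS d d' →ₗ[ℝ] ((Fin d × Fin d → ℝ) × (Fin d' × Fin d' → ℝ)) :=
  (coord d).prodMap (coord d')

end Joint


section Chain

variable {X : Type} [Fintype X] {d d' : ℕ}

lemma dim_pos (M : QHMM X d) : 0 < d := by
  rcases Nat.eq_zero_or_pos d with h | h
  · subst h
    have h0 : M.σ0.trace = 0 := by
      simp [Matrix.trace]
    rw [M.σ0_trace] at h0
    exact ((one_ne_zero : (1:ℂ) ≠ 0) h0).elim
  · exact h

lemma isHermitian_real_smul {n : ℕ} (c : ℝ) {ρ : Matrix (Fin n) (Fin n) ℂ}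
    (h : ρ.IsHermitian) : (c • ρ).IsHermitian := by
  have h2 : (c • ρ)ᴴ = c • ρ := by
    rw [Matrix.conjTranspose_smul, star_trivial, h.eq]
  exact h2

/-- Hermitian pairs form a real submodule. -/
def HermSub (d d' : ℕ) : Submodule ℝ (JS d d') where
  carrier := {p | p.1.IsHermitian ∧ p.2.IsHermitian}
  add_mem' := fun ha hb => ⟨ha.1.add hb.1, ha.2.add hb.2⟩
  zero_mem' := ⟨Matrix.isHermitian_zero, Matrix.isHermitian_zero⟩
  smul_mem' := by
    rintro c p ⟨h1, h2⟩
    exact ⟨isHermitian_real_smul c h1, isHermitian_real_smul c h2⟩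

lemma finrank_le_of_herm (Q : Submodule ℝ (JS d d')) (hQ : Q ≤ HermSub d d') :
    Module.finrank ℝ Q ≤ d * d + d' * d' := by
  have hinj : Function.Injective ((jcoord d d').comp Q.subtype) := by
    rw [← LinearMap.ker_eq_bot]
    rw [Submodule.eq_bot_iff]
    rintro ⟨p, hp⟩ hmem
    have hco : jcoord d d' p = 0 := hmem
    obtain ⟨hh1, hh2⟩ := hQ hp
    have e1 : coord d p.1 = 0 := congrArg Prod.fst hco
    have e2 : coord d' p.2 = 0 := congrArg Prod.snd hco
    have : p = 0 := Prod.ext (coord_inj hh1 e1) (coord_inj hh2 e2)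
    exact Subtype.ext this
  calc Module.finrank ℝ Q ≤
      Module.finrank ℝ ((Fin d × Fin d → ℝ) × (Fin d' × Fin d' → ℝ)) :=
        LinearMap.finrank_le_finrank_of_injective hinj
    _ = d * d + d' * d' := by
        rw [Module.finrank_prod, Module.finrank_pi, Module.finrank_pi]
        simp

variable (M : QHMM X d) (M' : QHMM X d')

/-- Span of joint states of words of length at most `k`. -/
def Vk (k : ℕ) : Submodule ℝ (JS d d') :=
  Submodule.span ℝ {p | ∃ w : List X, w.length ≤ k ∧ p = jstate M M' w}

lemma Vk_mono : Monotone (Vk M M') := fun k l hkl =>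
  Submodule.span_mono (fun p ⟨w, hw, hp⟩ => ⟨w, hw.trans hkl, hp⟩)

lemma jstate_mem_Vk (w : List X) (k : ℕ) (h : w.length ≤ k) :
    jstate M M' w ∈ Vk M M' k :=
  Submodule.subset_span ⟨w, h, rfl⟩

lemma jstate_herm (w : List X) : jstate M M' w ∈ HermSub d d' :=
  ⟨Aw_isHermitian M w M.σ0_posSemidef.isHermitian,
   Aw_isHermitian M' w M'.σ0_posSemidef.isHermitian⟩

lemma Vk_le_herm (k : ℕ) : Vk M M' k ≤ HermSub d d' := by
  apply Submodule.span_le.mpr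
  rintro p ⟨w, hw, rfl⟩
  exact jstate_herm M M' w

lemma map_Vk_le (x : X) (k : ℕ) :
    (Vk M M' k).map (jmap M M' x) ≤ Vk M M' (k + 1) := by
  rw [Vk, Submodule.map_span]
  apply Submodule.span_le.mpr
  rintro q ⟨p, ⟨w, hw, rfl⟩, rfl⟩
  rw [← jstate_append]
  exact Submodule.subset_span ⟨w ++ [x], by simpa using Nat.succ_le_succ hw, rfl⟩

lemma Vk_stable (k : ℕ) (h : Vk M M' (k + 1) = Vk M M' k) :
    ∀ j, Vk M M' (k + j) = Vk M M' k := by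
  intro j
  induction j with
  | zero => rfl
  | succ j ih =>
    refine le_antisymm ?_ (Vk_mono M M' (Nat.le_add_right k (j + 1)))
    rw [Vk]
    apply Submodule.span_le.mpr
    rintro p ⟨w, hw, rfl⟩
    by_cases hw' : w.length ≤ k + j
    · have h1 := jstate_mem_Vk M M' w (k + j) hw'
      rwa [ih] at h1
    · have hne : w ≠ [] := by
        intro hnil; subst hnil; simp at hw'
      obtain ⟨w', x, rfl⟩ : ∃ w' x, w = w' ++ [x] :=
        ⟨w.dropLast, w.getLast hne, (List.dropLast_append_getLast hne).symm⟩
      have hlen : w'.length ≤ k + j := by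
        simp only [List.length_append, List.length_singleton] at hw
        omega
      have h1 := jstate_mem_Vk M M' w' (k + j) hlen
      rw [ih] at h1
      have h2 : jmap M M' x (jstate M M' w') ∈ Vk M M' (k + 1) :=
        map_Vk_le M M' x k ⟨_, h1, rfl⟩
      rw [jstate_append]
      rwa [h] at h2

lemma jstate_nil_ne_zero : jstate M M' [] ≠ 0 := by
  intro h0
  have h1 : M.σ0 = 0 := congrArg Prod.fst h0
  have := M.σ0_trace
  rw [h1] at this
  simp at this

lemma exists_stable :
    ∃ k, k ≤ d * d + d' * d' - 1 ∧ Vk M M' (k + 1) = Vk M M' k := by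
  set N := d * d + d' * d' with hN
  have hNpos : 0 < N := by
    have := dim_pos M
    have h2 := Nat.mul_le_mul this this
    simp only [hN]
    nlinarith
  by_contra hcon
  push_neg at hcon
  have hstrict : ∀ k, k ≤ N - 1 → Vk M M' k < Vk M M' (k + 1) := fun k hk =>
    lt_of_le_of_ne (Vk_mono M M' (Nat.le_succ k)) (fun he => hcon k hk he.symm)
  have hgrow : ∀ k, k ≤ N → k + 1 ≤ Module.finrank ℝ (Vk M M' k) := by
    intro k
    induction k with
    | zero =>
      intro _
      have hmem := jstate_mem_Vk M M' [] 0 (le_refl _)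
      have hnt : Nontrivial (Vk M M' 0) :=
        ⟨⟨jstate M M' [], hmem⟩, 0, fun he =>
          jstate_nil_ne_zero M M' (congrArg Subtype.val he)⟩
      exact Module.finrank_pos_iff.mpr hnt
    | succ k ih =>
      intro hk
      have h1 := ih (by omega)
      have h2 := Submodule.finrank_lt_finrank_of_lt (hstrict k (by omega))
      omega
  have hbig := hgrow N (le_refl N)
  have hsmall := finrank_le_of_herm (Vk M M' N) (Vk_le_herm M M' N)
  omega

lemma agree_le (L : ℕ) (h : ∀ w : List X, w.length = L → M.P w = M'.P w) :
    ∀ w : List X, w.length ≤ L → M.P w = M'.P w := by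
  have key : ∀ n, ∀ w : List X, w.length + n = L → M.P w = M'.P w := by
    intro n
    induction n with
    | zero => intro w hw; exact h w (by omega)
    | succ n ih =>
      intro w hw
      rw [P_sum M w, P_sum M' w]
      exact Finset.sum_congr rfl fun x _ => ih (w ++ [x]) (by simp; omega)
  intro w hw
  exact key (L - w.length) w (by omega)

end Chain

end QHMMAux

/-- Two QHMMs generate the same process iff they agree on all words of length
`2·d_max² − 1`, where `d_max = max{d, d'}`. -/
theorem qhmm_identifiability_by_length {X : Type} [Fintype X] {d d' : ℕ}
    (M : QHMM X d) (M' : QHMM X d') :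
    (∀ w : List X, M.P w = M'.P w) ↔
      (∀ w : List X, w.length = 2 * (max d d') ^ 2 - 1 → M.P w = M'.P w) := by
  constructor
  · exact fun h w _ => h w
  · intro h
    have hd := QHMMAux.dim_pos M
    have hd' := QHMMAux.dim_pos M'
    have hle := QHMMAux.agree_le M M' (2 * (max d d') ^ 2 - 1) h
    obtain ⟨k, hk, hstab⟩ := QHMMAux.exists_stable M M'
    have hdm : d * d + d' * d' ≤ 2 * (max d d') ^ 2 := by
      have h1 : d ≤ max d d' := le_max_left _ _
      have h2 : d' ≤ max d d' := le_max_right _ _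
      have h3 := Nat.mul_le_mul h1 h1
      have h4 := Nat.mul_le_mul h2 h2
      nlinarith
    have hdd : 1 ≤ d * d := Nat.mul_le_mul hd hd
    have hker : QHMMAux.Vk M M' k ≤ LinearMap.ker (QHMMAux.φd d d') := by
      rw [QHMMAux.Vk]
      apply Submodule.span_le.mpr
      rintro p ⟨w, hw, rfl⟩
      rw [SetLike.mem_coe, LinearMap.mem_ker, QHMMAux.φd_jstate]
      have hwl : w.length ≤ 2 * (max d d') ^ 2 - 1 := by omega
      have := hle w hwl
      linarith
    intro w
    have h1 := QHMMAux.jstate_mem_Vk M M' w (k + w.length) (by omega)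
    rw [QHMMAux.Vk_stable M M' k hstab w.length] at h1
    have h2 := hker h1
    rw [LinearMap.mem_ker, QHMMAux.φd_jstate] at h2
    linarith


end
end

section
/- Let M be a quantum hidden Markov model over a finite alphabet X with memory dimension d generating word-probability function P, and let N be a generalized hidden Markov model over the same alphabet X with latent dimension n generating word-probability function P'. Then P(w) = P'(w) for every word w ∈ X* if and only if P(w) = P'(w) for every word w ∈ X* of length exactly 2·max{d², n} − 1. -/
open Matrix
open scoped ComplexOrder

noncomputable section

section KeyLemma

variable {X : Type} {V : Type*} [AddCommGroup V] [Module ℂ V]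

/-- Apply the word of linear maps from the left (foldl). -/
def applyW (C : X → V →ₗ[ℂ] V) (w : List X) (u : V) : V :=
  w.foldl (fun u x => C x u) u

@[simp] lemma applyW_nil (C : X → V →ₗ[ℂ] V) (u : V) : applyW C [] u = u := rfl

lemma applyW_cons (C : X → V →ₗ[ℂ] V) (x : X) (w : List X) (u : V) :
    applyW C (x :: w) u = applyW C w (C x u) := rfl

lemma applyW_concat (C : X → V →ₗ[ℂ] V) (w : List X) (x : X) (u : V) :
    applyW C (w ++ [x]) u = C x (applyW C w u) := by
  simp [applyW, List.foldl_append]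

lemma applyW_zero (C : X → V →ₗ[ℂ] V) (w : List X) : applyW C w (0 : V) = 0 := by
  induction w with
  | nil => rfl
  | cons x w ih => rw [applyW_cons, map_zero, ih]

/-- The forward span after `k` steps. -/
def Sspan (C : X → V →ₗ[ℂ] V) (u0 : V) (k : ℕ) : Submodule ℂ V :=
  Submodule.span ℂ {v | ∃ w : List X, w.length ≤ k ∧ v = applyW C w u0}

lemma mem_Sspan (C : X → V →ₗ[ℂ] V) (u0 : V) {k : ℕ} {w : List X} (h : w.length ≤ k) :
    applyW C w u0 ∈ Sspan C u0 k :=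
  Submodule.subset_span ⟨w, h, rfl⟩

lemma Sspan_mono (C : X → V →ₗ[ℂ] V) (u0 : V) {j k : ℕ} (h : j ≤ k) :
    Sspan C u0 j ≤ Sspan C u0 k :=
  Submodule.span_mono (fun v ⟨w, hw, he⟩ => ⟨w, hw.trans h, he⟩)

lemma Sspan_map_le (C : X → V →ₗ[ℂ] V) (u0 : V) (x : X) (k : ℕ) :
    (Sspan C u0 k).map (C x) ≤ Sspan C u0 (k + 1) := by
  rw [Sspan, Submodule.map_span]
  apply Submodule.span_le.2
  rintro v ⟨v', ⟨w, hw, rfl⟩, rfl⟩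
  rw [← applyW_concat]
  exact mem_Sspan C u0 (by simp; omega)

lemma key_lemma [FiniteDimensional ℂ V] (D : ℕ) (hD : Module.finrank ℂ V ≤ D)
    (C : X → V →ₗ[ℂ] V) (u0 : V) (χ : V →ₗ[ℂ] ℂ)
    (h0 : ∀ w : List X, w.length < D → χ (applyW C w u0) = 0) :
    ∀ w : List X, χ (applyW C w u0) = 0 := by
  by_cases hu : u0 = 0
  · intro w; rw [hu, applyW_zero, map_zero]
  -- there is a stabilization point k < D
  have hex : ∃ k, k < D ∧ Sspan C u0 (k + 1) ≤ Sspan C u0 k := by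
    by_contra hcon
    push_neg at hcon
    have grow : ∀ k, k ≤ D → k + 1 ≤ Module.finrank ℂ (Sspan C u0 k) := by
      intro k
      induction k with
      | zero =>
        intro _
        have hne : Sspan C u0 0 ≠ ⊥ := by
          intro hbot
          have : u0 ∈ Sspan C u0 0 := mem_Sspan C u0 (w := []) (by simp)
          rw [hbot] at this
          exact hu (Submodule.mem_bot ℂ |>.1 this)
        have := (Submodule.one_le_finrank_iff (S := Sspan C u0 0)).2 hne
        omega
      | succ k ih =>
        intro hk
        have h1 := ih (by omega)
        have hlt : Sspan C u0 k < Sspan C u0 (k + 1) :=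
          lt_of_le_of_ne (Sspan_mono C u0 (by omega))
            (fun he => hcon k (by omega) (le_of_eq he.symm))
        have := Submodule.finrank_lt_finrank_of_lt hlt
        omega
    have h1 := grow D le_rfl
    have h2 : Module.finrank ℂ (Sspan C u0 D) ≤ Module.finrank ℂ V :=
      Submodule.finrank_le _
    omega
  obtain ⟨k, hkD, hstab⟩ := hex
  -- the chain stabilizes at k
  have all_le : ∀ j, Sspan C u0 j ≤ Sspan C u0 k := by
    intro j
    induction j with
    | zero => exact Sspan_mono C u0 (Nat.zero_le k)
    | succ j ih =>
      apply Submodule.span_le.2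
      rintro v ⟨w, hw, rfl⟩
      rcases w.eq_nil_or_concat' with rfl | ⟨w', x, rfl⟩
      · exact mem_Sspan C u0 (by simp)
      · have hw' : w'.length ≤ j := by simp at hw; omega
        have h1 : applyW C w' u0 ∈ Sspan C u0 k := ih (mem_Sspan C u0 hw')
        rw [applyW_concat]
        exact hstab (Sspan_map_le C u0 x k ⟨_, h1, rfl⟩)
  -- χ kills the stabilized space
  have hker : Sspan C u0 k ≤ LinearMap.ker χ := by
    apply Submodule.span_le.2
    rintro v ⟨w, hw, rfl⟩
    exact LinearMap.mem_ker.2 (h0 w (lt_of_le_of_lt hw hkD))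
  intro w
  exact LinearMap.mem_ker.1 (hker (all_le w.length (mem_Sspan C u0 le_rfl)))

end KeyLemma


section Identifiability

variable {X : Type} [Fintype X] {d n : ℕ}

/-! #### Summing over the next symbol -/

lemma QHMM.Aw_concat (M : QHMM X d) (w : List X) (x : X) (ρ : Matrix (Fin d) (Fin d) ℂ) :
    M.Aw (w ++ [x]) ρ = M.A x (M.Aw w ρ) := by
  simp [QHMM.Aw, List.foldl_append]

lemma QHMM.A_of_hermitian (M : QHMM X d) (x : X) {ρ : Matrix (Fin d) (Fin d) ℂ}
    (h : ρ.IsHermitian) : (M.A x ρ).IsHermitian := by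
  unfold QHMM.A Matrix.IsHermitian
  rw [Matrix.conjTranspose_sum]
  refine Finset.sum_congr rfl fun y _ => ?_
  rw [Matrix.conjTranspose_mul, Matrix.conjTranspose_mul, Matrix.conjTranspose_conjTranspose,
    h.eq, Matrix.mul_assoc]

lemma QHMM.Aw_hermitian (M : QHMM X d) (w : List X) : (M.Aw w M.σ0).IsHermitian := by
  have : ∀ (w : List X) (ρ : Matrix (Fin d) (Fin d) ℂ), ρ.IsHermitian →
      (M.Aw w ρ).IsHermitian := by
    intro w
    induction w with
    | nil => intro ρ h; exact h
    | cons x w ih => intro ρ h; exact ih _ (M.A_of_hermitian x h)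
  exact this w M.σ0 M.σ0_posSemidef.isHermitian

lemma QHMM.trace_Aw_real (M : QHMM X d) (w : List X) :
    (M.Aw w M.σ0).trace = ((M.P w : ℝ) : ℂ) := by
  have h := M.Aw_hermitian w
  have h2 : star (M.Aw w M.σ0).trace = (M.Aw w M.σ0).trace := by
    rw [← Matrix.trace_conjTranspose, h.eq]
  exact (Complex.conj_eq_iff_re.1 h2).symm

lemma QHMM.trace_A_sum (M : QHMM X d) (ρ : Matrix (Fin d) (Fin d) ℂ) :
    ∑ x : X, (M.A x ρ).trace = ρ.trace := by
  have hstep : ∀ x : X, (M.A x ρ).trace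
      = ∑ y : Fin M.m, (((M.K x y)ᴴ * M.K x y) * ρ).trace := by
    intro x
    rw [QHMM.A, Matrix.trace_sum]
    exact Finset.sum_congr rfl fun y _ => Matrix.trace_mul_cycle _ _ _
  calc ∑ x : X, (M.A x ρ).trace
      = ∑ x : X, ∑ y : Fin M.m, (((M.K x y)ᴴ * M.K x y) * ρ).trace :=
        Finset.sum_congr rfl fun x _ => hstep x
    _ = ((∑ x : X, ∑ y : Fin M.m, (M.K x y)ᴴ * M.K x y) * ρ).trace := by
        rw [Finset.sum_mul, Matrix.trace_sum]
        refine Finset.sum_congr rfl fun x _ => ?_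
        rw [Finset.sum_mul, Matrix.trace_sum]
    _ = ρ.trace := by rw [M.kraus_normalized, Matrix.one_mul]

lemma QHMM.P_sum (M : QHMM X d) (w : List X) : ∑ x : X, M.P (w ++ [x]) = M.P w := by
  unfold QHMM.P
  simp only [M.Aw_concat]
  rw [← Complex.re_sum, M.trace_A_sum]

lemma mulVec_sumX (A : Matrix (Fin n) (Fin n) ℝ) (f : X → Fin n → ℝ) :
    A *ᵥ (∑ x : X, f x) = ∑ x : X, A *ᵥ f x := by
  funext i
  simp [Matrix.mulVec, dotProduct, Finset.sum_apply, Finset.mul_sum]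
  rw [Finset.sum_comm]

lemma dot_sumX (v : Fin n → ℝ) (f : X → Fin n → ℝ) :
    v ⬝ᵥ (∑ x : X, f x) = ∑ x : X, v ⬝ᵥ f x := by
  simp [dotProduct, Finset.sum_apply, Finset.mul_sum]
  rw [Finset.sum_comm]

lemma sumX_mulVec (f : X → Matrix (Fin n) (Fin n) ℝ) (v : Fin n → ℝ) :
    (∑ x : X, f x) *ᵥ v = ∑ x : X, f x *ᵥ v := by
  funext i
  simp [Matrix.mulVec, dotProduct, Finset.sum_apply, Matrix.sum_apply, Finset.sum_mul]
  rw [Finset.sum_comm]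

lemma GHMM.P_sum (N : GHMM X n) (w : List X) : ∑ x : X, N.P (w ++ [x]) = N.P w := by
  have hx : ∀ x : X, N.P (w ++ [x]) = N.η0 ⬝ᵥ ((w.map N.T).prod *ᵥ (N.T x *ᵥ N.τ)) := by
    intro x
    unfold GHMM.P
    rw [List.map_append, List.prod_append, List.map_singleton, List.prod_singleton,
      ← Matrix.mulVec_mulVec]
  calc ∑ x : X, N.P (w ++ [x])
      = ∑ x : X, N.η0 ⬝ᵥ ((w.map N.T).prod *ᵥ (N.T x *ᵥ N.τ)) :=
        Finset.sum_congr rfl fun x _ => hx x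
    _ = N.η0 ⬝ᵥ ((w.map N.T).prod *ᵥ ((∑ x : X, N.T x) *ᵥ N.τ)) := by
        rw [sumX_mulVec, mulVec_sumX, dot_sumX]
    _ = N.P w := by rw [N.fixed]; rfl

/-! #### The combined linear representation -/

/-- The CP map of a symbol, as a `ℂ`-linear map. -/
def QHMM.Alin (M : QHMM X d) (x : X) :
    Matrix (Fin d) (Fin d) ℂ →ₗ[ℂ] Matrix (Fin d) (Fin d) ℂ where
  toFun := M.A x
  map_add' ρ σ := by
    show ∑ y : Fin M.m, M.K x y * (ρ + σ) * (M.K x y)ᴴ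
      = (∑ y : Fin M.m, M.K x y * ρ * (M.K x y)ᴴ) + ∑ y : Fin M.m, M.K x y * σ * (M.K x y)ᴴ
    rw [← Finset.sum_add_distrib]
    exact Finset.sum_congr rfl fun y _ => by rw [Matrix.mul_add, Matrix.add_mul]
  map_smul' c ρ := by
    show ∑ y : Fin M.m, M.K x y * (c • ρ) * (M.K x y)ᴴ
      = c • ∑ y : Fin M.m, M.K x y * ρ * (M.K x y)ᴴ
    rw [Finset.smul_sum]
    exact Finset.sum_congr rfl fun y _ => by rw [Matrix.mul_smul, Matrix.smul_mul]

/-- Complexification of a real matrix. -/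
def cmat (A : Matrix (Fin n) (Fin n) ℝ) : Matrix (Fin n) (Fin n) ℂ :=
  Matrix.of fun i j => ((A i j : ℝ) : ℂ)

/-- Complexification of a real vector. -/
def cvec (v : Fin n → ℝ) : Fin n → ℂ := fun i => ((v i : ℝ) : ℂ)

lemma cvec_vecMul (v : Fin n → ℝ) (A : Matrix (Fin n) (Fin n) ℝ) :
    cvec v ᵥ* cmat A = cvec (v ᵥ* A) := by
  funext j
  simp only [cvec, cmat, Matrix.vecMul, dotProduct, Matrix.of_apply]
  push_cast
  rfl

lemma cvec_dot (u v : Fin n → ℝ) : cvec u ⬝ᵥ cvec v = ((u ⬝ᵥ v : ℝ) : ℂ) := by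
  simp only [cvec, dotProduct]
  push_cast
  rfl

/-- Right-multiplication by the complexified transition matrix, as a linear map. -/
def GHMM.Tlin (N : GHMM X n) (x : X) : (Fin n → ℂ) →ₗ[ℂ] (Fin n → ℂ) :=
  (cmat (N.T x)).vecMulLinear

/-- The combined state space. -/
abbrev CombV (d n : ℕ) := Matrix (Fin d) (Fin d) ℂ × (Fin n → ℂ)

/-- The combined transition maps. -/
def combC (M : QHMM X d) (N : GHMM X n) (x : X) : CombV d n →ₗ[ℂ] CombV d n :=
  (M.Alin x).prodMap (N.Tlin x)

/-- The dot-with-`τ` functional. -/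
def dotlin (τ : Fin n → ℂ) : (Fin n → ℂ) →ₗ[ℂ] ℂ where
  toFun v := v ⬝ᵥ τ
  map_add' u v := add_dotProduct u v τ
  map_smul' c v := smul_dotProduct c v τ

/-- The difference functional. -/
def combChi (N : GHMM X n) : CombV d n →ₗ[ℂ] ℂ :=
  (Matrix.traceLinearMap (Fin d) ℂ ℂ).comp (LinearMap.fst ℂ _ _)
    - (dotlin (cvec N.τ)).comp (LinearMap.snd ℂ _ _)

lemma applyW_combC (M : QHMM X d) (N : GHMM X n) (w : List X)
    (ρ : Matrix (Fin d) (Fin d) ℂ) (v : Fin n → ℂ) :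
    applyW (combC M N) w (ρ, v) = (M.Aw w ρ, v ᵥ* (w.map (fun x => cmat (N.T x))).prod) := by
  induction w generalizing ρ v with
  | nil => simp [Matrix.vecMul_one, QHMM.Aw]
  | cons x w ih =>
    rw [applyW_cons]
    show applyW (combC M N) w (M.A x ρ, v ᵥ* cmat (N.T x)) = _
    rw [ih]
    rw [List.map_cons, List.prod_cons, ← Matrix.vecMul_vecMul]
    rfl

lemma cvec_vecMul_prod (N : GHMM X n) (w : List X) (v : Fin n → ℝ) :
    cvec v ᵥ* (w.map (fun x => cmat (N.T x))).prod = cvec (v ᵥ* (w.map N.T).prod) := by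
  induction w generalizing v with
  | nil => simp [Matrix.vecMul_one]
  | cons x w ih =>
    rw [List.map_cons, List.prod_cons, ← Matrix.vecMul_vecMul, cvec_vecMul, ih,
      List.map_cons, List.prod_cons, Matrix.vecMul_vecMul]

lemma combChi_applyW (M : QHMM X d) (N : GHMM X n) (w : List X) :
    combChi N (applyW (combC M N) w (M.σ0, cvec N.η0)) = ((M.P w : ℝ) : ℂ) - ((N.P w : ℝ) : ℂ) := by
  rw [applyW_combC, cvec_vecMul_prod]
  show (M.Aw w M.σ0).trace - cvec (N.η0 ᵥ* (w.map N.T).prod) ⬝ᵥ cvec N.τ = _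
  rw [M.trace_Aw_real, cvec_dot]
  congr 2
  unfold GHMM.P
  rw [Matrix.dotProduct_mulVec]

lemma finrank_CombV : Module.finrank ℂ (CombV d n) = d * d + n := by
  rw [Module.finrank_prod, Module.finrank_pi, Module.finrank_matrix]
  simp

end Identifiability


/-- A QHMM and a GHMM generate the same process iff they agree on all words of length
`2·max{d², n} − 1`. -/
theorem qhmm_ghmm_identifiability_by_length {X : Type} [Fintype X] {d n : ℕ}
    (M : QHMM X d) (N : GHMM X n) :
    (∀ w : List X, M.P w = N.P w) ↔
      (∀ w : List X, w.length = 2 * max (d ^ 2) n - 1 → M.P w = N.P w) := by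
  constructor
  · intro h w _
    exact h w
  · intro h
    set L : ℕ := 2 * max (d ^ 2) n - 1 with hL
    -- agreement on all words of length ≤ L
    have pad : ∀ k (w : List X), w.length + k = L → M.P w = N.P w := by
      intro k
      induction k with
      | zero => intro w hw; exact h w (by omega)
      | succ k ih =>
        intro w hw
        rw [← M.P_sum w, ← N.P_sum w]
        refine Finset.sum_congr rfl fun x _ => ?_
        exact ih (w ++ [x]) (by simp; omega)
    have hle : ∀ w : List X, w.length ≤ L → M.P w = N.P w := fun w hw =>
      pad (L - w.length) w (by omega)
    -- apply the key lemma to the combined representation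
    have hrank : Module.finrank ℂ (CombV d n) ≤ 2 * max (d ^ 2) n := by
      rw [finrank_CombV]
      have h1 : d * d ≤ max (d ^ 2) n := by
        have := le_max_left (d ^ 2) n
        nlinarith [sq_nonneg d, pow_two d]
      have h2 : n ≤ max (d ^ 2) n := le_max_right _ _
      omega
    have hzero := key_lemma (2 * max (d ^ 2) n) hrank (combC M N) (M.σ0, cvec N.η0)
      (combChi N) ?_
    · intro w
      have := hzero w
      rw [combChi_applyW] at this
      have := sub_eq_zero.1 this
      exact_mod_cast this
    · intro w hw
      rw [combChi_applyW, sub_eq_zero]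
      exact_mod_cast hle w (by omega)


end
end

section
/- Let V be a vector space over a field with finite dimension n, let F be a finite set of linear endomorphisms of V, and let v ∈ V. Then the linear span of the set of vectors obtained by applying to v any composition of at most n − 1 maps from F (including v itself, as the empty composition) equals the linear span of the set of vectors obtained by applying to v any finite composition of maps from F. -/
open Matrix

noncomputable section

namespace SpanShortAux

variable {K : Type} [Field K] {V : Type} [AddCommGroup V] [Module K V]
  (F : Finset (V →ₗ[K] V)) (v : V)

def W (k : ℕ) : Submodule K V :=
  Submodule.span K {u | ∃ w : List (V →ₗ[K] V), (∀ f ∈ w, f ∈ F) ∧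
    w.length ≤ k ∧ u = w.foldl (fun z f => f z) v}

lemma W_mono : Monotone (W F v) := by
  intro a b hab
  apply Submodule.span_mono
  rintro u ⟨w, hw, hl, rfl⟩
  exact ⟨w, hw, hl.trans hab, rfl⟩

lemma mem_W_self {k : ℕ} (w : List (V →ₗ[K] V)) (hw : ∀ f ∈ w, f ∈ F)
    (hl : w.length ≤ k) : w.foldl (fun z f => f z) v ∈ W F v k :=
  Submodule.subset_span ⟨w, hw, hl, rfl⟩

lemma apply_W {k : ℕ} {f : V →ₗ[K] V} (hf : f ∈ F) {x : V} (hx : x ∈ W F v k) :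
    f x ∈ W F v (k+1) := by
  have hmap : Submodule.map f (W F v k) ≤ W F v (k+1) := by
    rw [W, Submodule.map_span, Submodule.span_le]
    rintro u ⟨x, ⟨w, hw, hl, rfl⟩, rfl⟩
    apply Submodule.subset_span
    refine ⟨w ++ [f], ?_, by simp; omega, by simp [List.foldl_append]⟩
    intro g hg
    rcases List.mem_append.mp hg with h | h
    · exact hw g h
    · simp at h; subst h; exact hf
  exact hmap ⟨x, hx, rfl⟩

lemma step {k : ℕ} (h : W F v (k+1) = W F v k) : W F v (k+2) = W F v (k+1) := by
  refine le_antisymm ?_ (W_mono F v (by omega))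
  rw [W, Submodule.span_le]
  rintro u ⟨w, hw, hl, rfl⟩
  rcases Nat.lt_or_ge w.length (k+2) with h1 | h1
  · exact mem_W_self F v w hw (by omega)
  · rcases w.eq_nil_or_concat with rfl | ⟨w', f, rfl⟩
    · simp at h1
    · have hlw' : w'.length ≤ k + 1 := by simp at hl; omega
      have hx : w'.foldl (fun z f => f z) v ∈ W F v k := by
        rw [← h]
        exact mem_W_self F v w' (fun g hg => hw g (by simp [hg])) hlw'
      have hf : f ∈ F := hw f (by simp)
      have := apply_W F v hf hx
      simpa [List.foldl_append] using this

lemma step_all {k : ℕ} (h : W F v (k+1) = W F v k) :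
    ∀ m, W F v (k + m + 1) = W F v (k + m) := by
  intro m
  induction m with
  | zero => simpa using h
  | succ m ih =>
    have := step F v ih
    convert this using 2 <;> omega

lemma stable {k : ℕ} (h : W F v (k+1) = W F v k) :
    ∀ m, W F v (k + m) = W F v k := by
  intro m
  induction m with
  | zero => rfl
  | succ m ih => rw [show k + (m+1) = k + m + 1 by omega, step_all F v h m, ih]

lemma exists_stab [FiniteDimensional K V] (hv : v ≠ 0) :
    ∃ k ≤ Module.finrank K V - 1, W F v (k+1) = W F v k := by
  by_contra hcon
  push_neg at hcon
  set n := Module.finrank K V with hn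
  have hn1 : 1 ≤ n := by
    have : Nontrivial V := ⟨v, 0, hv⟩
    exact Module.finrank_pos
  have key : ∀ k ≤ n - 1, k + 1 ≤ Module.finrank K (W F v k) := by
    intro k hk
    induction k with
    | zero =>
      rw [Nat.succ_le_iff, Module.finrank_pos_iff_exists_ne_zero]
      refine ⟨⟨v, mem_W_self F v [] (by simp) (by simp)⟩, ?_⟩
      exact fun h => hv (congrArg Subtype.val h)
    | succ k ih =>
      have hk' : k ≤ n - 1 := by omega
      have hlt : W F v k < W F v (k+1) := by
        refine lt_of_le_of_ne (W_mono F v (by omega)) ?_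
        intro h
        exact hcon k hk' h.symm
      have := Submodule.finrank_lt_finrank_of_lt hlt
      omega
  have h1 : n ≤ Module.finrank K (W F v (n-1)) := by
    have := key (n-1) le_rfl
    omega
  have h2 : Module.finrank K (W F v (n-1)) ≤ n := Submodule.finrank_le _
  have htop : W F v (n-1) = ⊤ :=
    Submodule.eq_top_of_finrank_eq (le_antisymm h2 h1)
  have : W F v (n-1+1) = W F v (n-1) := by
    refine le_antisymm ?_ (W_mono F v (by omega))
    rw [htop]; exact le_top
  exact hcon (n-1) le_rfl this

lemma foldl_zero (w : List (V →ₗ[K] V)) :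
    w.foldl (fun z f => f z) (0 : V) = 0 := by
  induction w with
  | nil => rfl
  | cons f w ih => simpa using ih

end SpanShortAux

/-- In an `n`-dimensional vector space, compositions of at most `n − 1` maps from a
finite set `F` of endomorphisms applied to `v` span the same subspace as all finite
compositions of maps from `F` applied to `v`. -/
theorem span_short_compositions {K : Type} [Field K] {V : Type} [AddCommGroup V]
    [Module K V] [FiniteDimensional K V] (F : Finset (V →ₗ[K] V)) (v : V) :
    Submodule.span K {u | ∃ w : List (V →ₗ[K] V), (∀ f ∈ w, f ∈ F) ∧
        w.length ≤ Module.finrank K V - 1 ∧ u = w.foldl (fun z f => f z) v}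
      = Submodule.span K {u | ∃ w : List (V →ₗ[K] V), (∀ f ∈ w, f ∈ F) ∧
        u = w.foldl (fun z f => f z) v} := by
  open SpanShortAux in
  rcases eq_or_ne v 0 with rfl | hv
  · -- trivial case: everything is 0
    refine le_antisymm ?_ ?_ <;>
    · rw [Submodule.span_le]
      rintro u ⟨w, hw, h⟩
      · first
        | (obtain ⟨hl, rfl⟩ := h
           rw [foldl_zero]
           exact Submodule.zero_mem _)
        | (subst h
           rw [foldl_zero]
           exact Submodule.zero_mem _)
  · set n := Module.finrank K V with hn
    obtain ⟨k, hk, hstab⟩ := exists_stab F v hv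
    have hLHS : Submodule.span K {u | ∃ w : List (V →ₗ[K] V), (∀ f ∈ w, f ∈ F) ∧
        w.length ≤ n - 1 ∧ u = w.foldl (fun z f => f z) v} = W F v (n-1) := rfl
    rw [hLHS]
    refine le_antisymm (Submodule.span_mono ?_) ?_
    · rintro u ⟨w, hw, hl, rfl⟩
      exact ⟨w, hw, rfl⟩
    · rw [Submodule.span_le]
      rintro u ⟨w, hw, rfl⟩
      have hmem : w.foldl (fun z f => f z) v ∈ W F v w.length :=
        mem_W_self F v w hw le_rfl
      rcases le_or_gt w.length (n-1) with h1 | h1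
      · exact W_mono F v h1 hmem
      · have hk2 : k ≤ w.length := by omega
        have := stable F v hstab (w.length - k)
        rw [show k + (w.length - k) = w.length by omega] at this
        rw [this] at hmem
        exact W_mono F v (by omega) hmem

end
end

section
/- For every quantum hidden Markov model over a finite alphabet X with memory dimension d generating word-probability function P, there exists a generalized hidden Markov model over X with latent dimension d² that generates the same word-probability function P. -/
open Matrix
open scoped ComplexOrder

noncomputable section

namespace QGaux

variable {X : Type} [Fintype X] {d : ℕ}

/-- Real coordinates of a complex matrix (faithful on Hermitian matrices). -/
def phi (ρ : Matrix (Fin d) (Fin d) ℂ) (p : Fin d × Fin d) : ℝ :=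
  (ρ p.1 p.2).re + (ρ p.1 p.2).im

/-- Realification: builds a Hermitian matrix from real coordinates. -/
def VL : (Fin d × Fin d → ℝ) →ₗ[ℝ] Matrix (Fin d) (Fin d) ℂ where
  toFun v := Matrix.of fun i j =>
    (((v (i, j) + v (j, i)) / 2 : ℝ) : ℂ) + (((v (i, j) - v (j, i)) / 2 : ℝ) : ℂ) * Complex.I
  map_add' u v := by
    ext i j
    simp [Matrix.add_apply]
    ring
  map_smul' r v := by
    ext i j
    simp [Matrix.smul_apply, Complex.real_smul]
    ring

lemma VL_isHermitian (v : Fin d × Fin d → ℝ) : (VL v).IsHermitian := by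
  ext i j
  simp [VL, Matrix.conjTranspose_apply]
  apply Complex.ext <;> simp <;> ring

lemma VL_phi {ρ : Matrix (Fin d) (Fin d) ℂ} (h : ρ.IsHermitian) : VL (phi ρ) = ρ := by
  ext i j
  have hji : ρ j i = star (ρ i j) := by rw [← h.apply i j, star_star]
  simp only [VL, phi, LinearMap.coe_mk, AddHom.coe_mk, Matrix.of_apply, hji]
  apply Complex.ext <;> simp <;> ring

lemma phi_smul (r : ℝ) (ρ : Matrix (Fin d) (Fin d) ℂ) : phi (r • ρ) = r • phi ρ := by
  funext p
  simp [phi, Complex.real_smul, Complex.mul_re, Complex.mul_im, Matrix.smul_apply]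
  ring

lemma phi_sum {ι : Type*} (s : Finset ι) (f : ι → Matrix (Fin d) (Fin d) ℂ) :
    phi (∑ i ∈ s, f i) = ∑ i ∈ s, phi (f i) := by
  funext p
  simp [phi, Matrix.sum_apply, Complex.re_sum, Complex.im_sum, Finset.sum_add_distrib]

lemma VL_eq_sum (v : Fin d × Fin d → ℝ) :
    VL v = ∑ p : Fin d × Fin d, v p • VL (Pi.single p (1 : ℝ)) := by
  conv_lhs => rw [← Finset.univ_sum_single v]
  rw [map_sum]
  refine Finset.sum_congr rfl fun p _ => ?_
  have : (Pi.single p (v p) : Fin d × Fin d → ℝ)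
      = v p • (Pi.single p (1 : ℝ) : Fin d × Fin d → ℝ) := by
    rw [← Pi.single_smul, smul_eq_mul, mul_one]
  rw [this, LinearMap.map_smul]

/-- The CP map of a symbol, as a real-linear map. -/
def AL (M : QHMM X d) (x : X) : Matrix (Fin d) (Fin d) ℂ →ₗ[ℝ] Matrix (Fin d) (Fin d) ℂ where
  toFun ρ := M.A x ρ
  map_add' ρ σ := by
    simp [QHMM.A, Matrix.mul_add, Matrix.add_mul, Finset.sum_add_distrib]
  map_smul' r ρ := by
    simp [QHMM.A, Matrix.mul_smul, Matrix.smul_mul, Finset.smul_sum]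

lemma A_isHermitian (M : QHMM X d) (x : X) {ρ : Matrix (Fin d) (Fin d) ℂ}
    (h : ρ.IsHermitian) : (M.A x ρ).IsHermitian := by
  unfold Matrix.IsHermitian QHMM.A
  rw [Matrix.conjTranspose_sum]
  refine Finset.sum_congr rfl fun y _ => ?_
  simp [Matrix.conjTranspose_mul, Matrix.mul_assoc, h.eq]

lemma sum_trace (M : QHMM X d) (ρ : Matrix (Fin d) (Fin d) ℂ) :
    ∑ x : X, (M.A x ρ).trace = ρ.trace := by
  have h1 : ∀ x : X, (M.A x ρ).trace
      = ∑ y : Fin M.m, (((M.K x y)ᴴ * M.K x y) * ρ).trace := by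
    intro x
    rw [QHMM.A, Matrix.trace_sum]
    exact Finset.sum_congr rfl fun y _ => Matrix.trace_mul_cycle _ _ _
  calc ∑ x : X, (M.A x ρ).trace
      = ∑ x : X, ∑ y : Fin M.m, (((M.K x y)ᴴ * M.K x y) * ρ).trace := by
        exact Finset.sum_congr rfl fun x _ => h1 x
    _ = ((∑ x : X, ∑ y : Fin M.m, (M.K x y)ᴴ * M.K x y) * ρ).trace := by
        simp [Finset.sum_mul, Matrix.trace_sum]
    _ = ρ.trace := by rw [M.kraus_normalized, one_mul]

/-- The transition matrix on real coordinates. -/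
def T' (M : QHMM X d) (x : X) : Matrix (Fin d × Fin d) (Fin d × Fin d) ℝ :=
  Matrix.of fun p q => phi (M.A x (VL (Pi.single p (1 : ℝ)))) q

/-- The trace covector on real coordinates. -/
def tau' : Fin d × Fin d → ℝ := fun q => (VL (Pi.single q (1 : ℝ))).trace.re

lemma vecMul_T' (M : QHMM X d) (x : X) {ρ : Matrix (Fin d) (Fin d) ℂ}
    (h : ρ.IsHermitian) : (phi ρ) ᵥ* (T' M x) = phi (M.A x ρ) := by
  funext q
  have expand : M.A x ρ = ∑ p : Fin d × Fin d, phi ρ p • M.A x (VL (Pi.single p (1 : ℝ))) := by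
    have : M.A x ρ = AL M x (VL (phi ρ)) := by rw [VL_phi h]; rfl
    rw [this, VL_eq_sum (phi ρ), map_sum]
    refine Finset.sum_congr rfl fun p _ => ?_
    rw [LinearMap.map_smul]
    rfl
  rw [expand, phi_sum]
  simp only [Matrix.vecMul, dotProduct, T', Matrix.of_apply,
    Finset.sum_apply, phi_smul, Pi.smul_apply, smul_eq_mul]

lemma dot_tau' {ρ : Matrix (Fin d) (Fin d) ℂ} (h : ρ.IsHermitian) :
    phi ρ ⬝ᵥ tau' = ρ.trace.re := by
  have : ρ.trace = ∑ q : Fin d × Fin d, phi ρ q • (VL (Pi.single q (1 : ℝ))).trace := by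
    conv_lhs => rw [← VL_phi h, VL_eq_sum (phi ρ)]
    rw [Matrix.trace_sum]
    exact Finset.sum_congr rfl fun q _ => by rw [Matrix.trace_smul]
  rw [dotProduct]
  rw [this, Complex.re_sum]
  refine Finset.sum_congr rfl fun q _ => ?_
  simp [tau', Complex.real_smul, Complex.mul_re]

lemma fixed' (M : QHMM X d) : (∑ x : X, T' M x) *ᵥ tau' = tau' := by
  funext p
  have hB : (VL (Pi.single p (1 : ℝ))).IsHermitian := VL_isHermitian _
  calc ((∑ x : X, T' M x) *ᵥ tau') p
      = ∑ q : Fin d × Fin d, (∑ x : X, T' M x p q) * tau' q := by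
        simp [Matrix.mulVec, dotProduct, Finset.sum_apply, Matrix.sum_apply]
    _ = ∑ x : X, ∑ q : Fin d × Fin d, T' M x p q * tau' q := by
        rw [Finset.sum_comm]
        exact Finset.sum_congr rfl fun q _ => by rw [Finset.sum_mul]
    _ = ∑ x : X, (M.A x (VL (Pi.single p (1 : ℝ)))).trace.re := by
        refine Finset.sum_congr rfl fun x _ => ?_
        have := dot_tau' (A_isHermitian M x hB)
        rw [dotProduct] at this
        rw [← this]
        rfl
    _ = (∑ x : X, (M.A x (VL (Pi.single p (1 : ℝ)))).trace).re := by rw [Complex.re_sum]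
    _ = tau' p := by rw [sum_trace]; rfl

lemma main' (M : QHMM X d) (w : List X) {ρ : Matrix (Fin d) (Fin d) ℂ}
    (h : ρ.IsHermitian) :
    phi ρ ⬝ᵥ ((w.map (T' M)).prod *ᵥ tau') = (M.Aw w ρ).trace.re := by
  induction w generalizing ρ with
  | nil => simpa [QHMM.Aw] using dot_tau' h
  | cons x w ih =>
    have hAw : M.Aw (x :: w) ρ = M.Aw w (M.A x ρ) := rfl
    rw [hAw, List.map_cons, List.prod_cons, ← Matrix.mulVec_mulVec,
      Matrix.dotProduct_mulVec, vecMul_T' M x h]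
    exact ih (A_isHermitian M x h)

end QGaux

/-- Every QHMM of memory dimension `d` admits an equivalent GHMM of latent dimension
`d²` generating the same word-probability function. -/
theorem qhmm_to_ghmm {X : Type} [Fintype X] {d : ℕ} (M : QHMM X d) :
    ∃ G : GHMM X (d ^ 2), ∀ w : List X, G.P w = M.P w := by
  classical
  let e : Fin (d ^ 2) ≃ Fin d × Fin d := (finCongr (pow_two d)).trans finProdFinEquiv.symm
  have hσ : M.σ0.IsHermitian := M.σ0_posSemidef.1
  refine ⟨⟨fun p => QGaux.phi M.σ0 (e p), fun x => (QGaux.T' M x).submatrix e e,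
    fun q => QGaux.tau' (e q), ?_, ?_⟩, ?_⟩
  · have hsum : (∑ x : X, (QGaux.T' M x).submatrix e e)
        = (∑ x : X, QGaux.T' M x).submatrix e e := by
      ext p q
      simp [Matrix.sum_apply, Matrix.submatrix_apply]
    rw [hsum]
    have : (fun q => QGaux.tau' (e q)) = QGaux.tau' ∘ e := rfl
    rw [this, Matrix.submatrix_mulVec_equiv]
    have h2 : (QGaux.tau' ∘ e) ∘ e.symm = QGaux.tau' := by funext q; simp
    rw [h2, QGaux.fixed' M]
  · have := QGaux.dot_tau' hσ
    rw [dotProduct] at this ⊢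
    rw [← Equiv.sum_comp e (fun q => QGaux.phi M.σ0 q * QGaux.tau' q)] at this
    rw [this, M.σ0_trace, Complex.one_re]
  · intro w
    unfold GHMM.P QHMM.P
    simp only
    have hprod : (w.map fun x => (QGaux.T' M x).submatrix e e).prod
        = ((w.map (QGaux.T' M)).prod).submatrix e e := by
      induction w with
      | nil => simp
      | cons x w ih => simp [List.prod_cons, ih, Matrix.submatrix_mul_equiv]
    rw [hprod]
    have : (fun q => QGaux.tau' (e q)) = QGaux.tau' ∘ e := rfl
    rw [this, Matrix.submatrix_mulVec_equiv]
    have h2 : (QGaux.tau' ∘ e) ∘ e.symm = QGaux.tau' := by funext q; simp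
    rw [h2]
    have := QGaux.main' M w hσ
    rw [dotProduct] at this ⊢
    rw [← Equiv.sum_comp e
      (fun q => QGaux.phi M.σ0 q * ((w.map (QGaux.T' M)).prod *ᵥ QGaux.tau') q)] at this
    exact this



end
end

section
/- Consider the stochastic process P on the alphabet X = {0,1,2,3} defined by P(x₀x₁…x_{L−1}) = (1/4)·∏_{i=0}^{L−2} q(x_i, x_{i+1}), where q(x, y) = 1/3 if y ≠ x and q(x, y) = 0 if y = x (and P of the empty word is 1). There exists a quantum hidden Markov model over X with memory dimension 2 that generates P; since the Hankel rank of P is 4, this QHMM attains the lower bound d ≥ √(Hankel rank) with equality. -/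
open Matrix
open scoped ComplexOrder

noncomputable section

/-- Single-step transition weights: from any symbol, each of the other three symbols
follows with probability `1/3`. -/
def q4 (x y : Fin 4) : ℝ := if y = x then 0 else 1 / 3

/-- Product of consecutive transition weights along a word, starting from `x`. -/
def chain4 : Fin 4 → List (Fin 4) → ℝ
  | _, [] => 1
  | x, y :: rest => q4 x y * chain4 y rest

/-- The stationary Markov process on `{0,1,2,3}`:
`P(x₀…x_{L−1}) = (1/4)·∏ᵢ q(xᵢ, xᵢ₊₁)`, with `P(∅) = 1`. -/
def proc4 : List (Fin 4) → ℝ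
  | [] => 1
  | x :: rest => (1 / 4) * chain4 x rest


/-! ### Auxiliary development for the proof -/

/-- `del = √2 · ζ` where `ζ = e^{2πi/3}`; satisfies `del^6 = 8`. -/
def del : ℂ := Real.sqrt 2 * (-1 + Real.sqrt 3 * Complex.I) / 2

lemma s2sq : (Real.sqrt 2 : ℂ)^2 = 2 := by norm_cast; rw [Real.sq_sqrt]; norm_num
lemma s3sq : (Real.sqrt 3 : ℂ)^2 = 3 := by norm_cast; rw [Real.sq_sqrt]; norm_num

lemma d2 : del^2 = -1 - Real.sqrt 3 * Complex.I := by
  unfold del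
  linear_combination (((-1 + Real.sqrt 3 * Complex.I)/2)^2) * s2sq
    + (1/2 : ℂ) * Complex.I^2 * s3sq + (3/2 : ℂ) * Complex.I_sq

lemma d3 : del^3 = 2 * Real.sqrt 2 := by
  have h : del^3 = del^2 * del := by ring
  rw [h, d2]; unfold del
  linear_combination (-(Real.sqrt 2)/2 : ℂ) * Complex.I^2 * s3sq
    + (-(3*Real.sqrt 2)/2 : ℂ) * Complex.I_sq

lemma d6 : del^6 = 8 := by
  have h : del^6 = (del^3)^2 := by ring
  rw [h, d3]; linear_combination (4:ℂ) * s2sq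

lemma dstar : star del = del^5/4 := by
  have h5 : del^5 = del^2 * del^3 := by ring
  rw [h5, d2, d3]; unfold del
  simp [Complex.ext_iff]; constructor <;> ring

lemma d7 : del^7 = 8*del := by rw [show del^7 = del^6*del by ring, d6]
lemma d8 : del^8 = 8*del^2 := by rw [show del^8 = del^6*del^2 by ring, d6]
lemma d9 : del^9 = 8*del^3 := by rw [show del^9 = del^6*del^3 by ring, d6]
lemma d10 : del^10 = 8*del^4 := by rw [show del^10 = del^6*del^4 by ring, d6]
lemma d11 : del^11 = 8*del^5 := by rw [show del^11 = del^6*del^5 by ring, d6]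
lemma d12 : del^12 = 64 := by rw [show del^12 = del^6*del^6 by ring, d6]; norm_num
lemma d13 : del^13 = 64*del := by rw [show del^13 = del^12*del by ring, d12]
lemma d14 : del^14 = 64*del^2 := by rw [show del^14 = del^12*del^2 by ring, d12]
lemma d15 : del^15 = 64*del^3 := by rw [show del^15 = del^12*del^3 by ring, d12]
lemma d20 : del^20 = 512*del^2 := by rw [show del^20 = del^12*del^8 by ring, d12, d8]; ring
lemma d25 : del^25 = 4096*del := by rw [show del^25 = del^12*del^12*del by ring, d12]; ring

lemma dquad : del^4 = -4 - 2*del^2 := by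
  rw [show del^4 = (del^2)^2 by ring, d2]
  linear_combination Complex.I^2 * s3sq + (3:ℂ) * Complex.I_sq

lemma dquint : del^5 = -4*del - 2*del^3 := by
  rw [show del^5 = del^4*del by ring, dquad]; ring

/-- The four Kraus operators `K_x = (1/√2)|φ_x⟩⟨φ_x^⊥|` of the SIC construction,
expressed as polynomials in `del`. -/
def Km : Fin 4 → Matrix (Fin 2) (Fin 2) ℂ
  | 0 => !![0, del^3/4; 0, 0]
  | 1 => !![-del^4/12, del^3/12; -del^5/12, del^4/12]
  | 2 => !![-del^2/6, del^3/12; -del/3, del^2/6]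
  | 3 => !![-1/3, del^3/12; -del^3/6, 1/3]

/-- The four SIC projectors `|φ_x⟩⟨φ_x|`. -/
def Pm : Fin 4 → Matrix (Fin 2) (Fin 2) ℂ
  | 0 => !![1, 0; 0, 0]
  | 1 => !![1/3, del^5/12; del/3, 2/3]
  | 2 => !![1/3, del/3; del^5/12, 2/3]
  | 3 => !![1/3, del^3/6; del^3/6, 2/3]

set_option maxHeartbeats 1600000 in
lemma KmH : ∀ y, (Km y)ᴴ =
    (![!![0, 0; del^3/4, 0],
       !![-del^2/6, -del/3; del^3/12, del^2/6],
       !![-del^4/12, -del^5/12; del^3/12, del^4/12],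
       !![-1/3, -del^3/6; del^3/12, 1/3]] : Fin 4 → _) y := by
  intro y
  fin_cases y <;>
    · ext i j
      fin_cases i <;> fin_cases j <;>
        simp [Km, Matrix.conjTranspose_apply, star_div₀, star_neg, dstar] <;>
        ring_nf <;> simp only [d6,d7,d8,d9,d10,d11,d12,d13,d14,d15,d20,d25,dquad,dquint] <;> try ring_nf

lemma trPm (x : Fin 4) : (Pm x).trace = 1 := by
  fin_cases x <;> simp [Pm, Matrix.trace_fin_two] <;> norm_num

set_option maxHeartbeats 3200000 in
lemma KPK (x y : Fin 4) : Km y * Pm x * (Km y)ᴴ = ((q4 x y : ℝ) : ℂ) • Pm y := by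
  rw [KmH]
  fin_cases x <;> fin_cases y <;>
    · ext i j
      fin_cases i <;> fin_cases j <;>
        simp [Km, Pm, q4, Matrix.mul_apply, Fin.sum_univ_two] <;> ring_nf <;>
        simp only [d6,d7,d8,d9,d10,d11,d12,d13,d14,d15,d20,d25,dquad,dquint] <;> try ring_nf

/-- The maximally mixed initial state. -/
def sig0 : Matrix (Fin 2) (Fin 2) ℂ := !![1/2, 0; 0, 1/2]

set_option maxHeartbeats 1600000 in
lemma Ksig0K (y : Fin 4) : Km y * sig0 * (Km y)ᴴ = (((1/4 : ℝ)) : ℂ) • Pm y := by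
  rw [KmH]
  fin_cases y <;>
    · ext i j
      fin_cases i <;> fin_cases j <;>
        simp [Km, Pm, sig0, Matrix.mul_apply, Fin.sum_univ_two] <;> ring_nf <;>
        simp only [d6,d7,d8,d9,d10,d11,d12,d13,d14,d15,d20,d25,dquad,dquint] <;> try ring_nf

lemma sig0_psd : sig0.PosSemidef := by
  have h : sig0 = Matrix.diagonal ![1/2, 1/2] := by
    ext i j; fin_cases i <;> fin_cases j <;> simp [sig0, Matrix.diagonal]
  rw [h]
  refine Matrix.PosSemidef.diagonal ?_
  intro i
  fin_cases i <;> · simp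

lemma sig0_trace : sig0.trace = 1 := by simp [sig0, Matrix.trace_fin_two]; norm_num

set_option maxHeartbeats 1600000 in
lemma kraus_norm : ∑ x : Fin 4, (Km x)ᴴ * Km x = 1 := by
  rw [Fin.sum_univ_four, KmH 0, KmH 1, KmH 2, KmH 3]
  ext i j
  fin_cases i <;> fin_cases j <;>
    simp [Km, Matrix.mul_apply, Matrix.one_apply, Fin.sum_univ_two] <;> ring_nf <;>
    simp only [d6,d7,d8,d9,d10,d11,d12,d13,d14,d15,d20,d25,dquad,dquint] <;> try ring_nf

/-- The qubit QHMM generating `proc4`. -/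
def MQ : QHMM (Fin 4) 2 where
  m := 1
  σ0 := sig0
  K := fun x _ => Km x
  σ0_posSemidef := sig0_psd
  σ0_trace := sig0_trace
  kraus_normalized := by
    have h : ∀ x : Fin 4, ∑ y : Fin 1, (Km x)ᴴ * Km x = (Km x)ᴴ * Km x :=
      fun x => Fin.sum_univ_one _
    calc ∑ x : Fin 4, ∑ y : Fin 1, (Km x)ᴴ * Km x
        = ∑ x : Fin 4, (Km x)ᴴ * Km x := by simp [h]
      _ = 1 := kraus_norm

lemma MA (x : Fin 4) (ρ : Matrix (Fin 2) (Fin 2) ℂ) :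
    MQ.A x ρ = Km x * ρ * (Km x)ᴴ :=
  Fin.sum_univ_one _

lemma Aw_cons (x : Fin 4) (w : List (Fin 4)) (ρ : Matrix (Fin 2) (Fin 2) ℂ) :
    MQ.Aw (x :: w) ρ = MQ.Aw w (MQ.A x ρ) := rfl

lemma Aw_smul (w : List (Fin 4)) : ∀ (c : ℂ) (ρ : Matrix (Fin 2) (Fin 2) ℂ),
    MQ.Aw w (c • ρ) = c • MQ.Aw w ρ := by
  induction w with
  | nil => intro c ρ; rfl
  | cons x r ih =>
    intro c ρ
    rw [Aw_cons, Aw_cons, MA, Matrix.mul_smul, Matrix.smul_mul, ← MA, ih]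

/-- Last letter of `x :: w`. -/
def lst : Fin 4 → List (Fin 4) → Fin 4
  | x, [] => x
  | _, y :: r => lst y r

lemma key (w : List (Fin 4)) : ∀ x : Fin 4,
    MQ.Aw w (Pm x) = ((chain4 x w : ℝ) : ℂ) • Pm (lst x w) := by
  induction w with
  | nil => intro x; simp [QHMM.Aw, lst, chain4]
  | cons y r ih =>
    intro x
    rw [Aw_cons, MA, KPK, Aw_smul, ih]
    show _ = ((chain4 x (y :: r) : ℝ) : ℂ) • Pm (lst x (y :: r))
    rw [show chain4 x (y :: r) = q4 x y * chain4 y r from rfl,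
      show lst x (y :: r) = lst y r from rfl]
    push_cast
    rw [smul_smul]

lemma MQ_gen : ∀ w : List (Fin 4), MQ.P w = proc4 w := by
  intro w
  cases w with
  | nil =>
    show (MQ.Aw [] MQ.σ0).trace.re = 1
    show (sig0).trace.re = 1
    rw [sig0_trace]; simp
  | cons x r =>
    show (MQ.Aw (x :: r) MQ.σ0).trace.re = proc4 (x :: r)
    rw [Aw_cons, MA]
    show (MQ.Aw r (Km x * sig0 * (Km x)ᴴ)).trace.re = _
    rw [Ksig0K, Aw_smul, key, smul_smul, Matrix.trace_smul, trPm, smul_eq_mul, mul_one,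
      ← Complex.ofReal_mul, Complex.ofReal_re]
    show (1/4 : ℝ) * chain4 x r = proc4 (x :: r)
    rfl

/-! ### Hankel rank -/

/-- The Hankel generators `g x = chain4 x`. -/
def gfun (x : Fin 4) : List (Fin 4) → ℝ := chain4 x

lemma chain4_append (t v : List (Fin 4)) : ∀ x,
    chain4 x (t ++ v) = chain4 x t * chain4 (lst x t) v := by
  induction t with
  | nil => intro x; simp [chain4, lst]
  | cons y r ih =>
    intro x
    show q4 x y * chain4 y (r ++ v) = q4 x y * chain4 y r * chain4 (lst y r) v
    rw [ih y]; ring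

lemma proc4_eq_sum : proc4 = fun v => (1/4) * (gfun 0 v + gfun 1 v + gfun 2 v + gfun 3 v) := by
  funext v
  cases v with
  | nil => simp [proc4, gfun, chain4]; norm_num
  | cons x r =>
    show (1/4) * chain4 x r = _
    simp only [gfun]
    show _ = (1/4) * (q4 0 x * chain4 x r + q4 1 x * chain4 x r
      + q4 2 x * chain4 x r + q4 3 x * chain4 x r)
    fin_cases x <;> · simp (config := { decide := true }) [q4]; try ring

lemma translate_mem (u : List (Fin 4)) :
    (fun v => proc4 (u ++ v)) ∈ Submodule.span ℝ (Set.range gfun) := by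
  cases u with
  | nil =>
    have h : (fun v => proc4 ([] ++ v)) =
        (1/4 : ℝ) • gfun 0 + (1/4 : ℝ) • gfun 1 + (1/4 : ℝ) • gfun 2 + (1/4 : ℝ) • gfun 3 := by
      funext v
      rw [List.nil_append, proc4_eq_sum]
      simp [Pi.add_apply]; ring
    rw [h]
    have m0 : gfun 0 ∈ Submodule.span ℝ (Set.range gfun) := Submodule.subset_span ⟨0, rfl⟩
    have m1 : gfun 1 ∈ Submodule.span ℝ (Set.range gfun) := Submodule.subset_span ⟨1, rfl⟩
    have m2 : gfun 2 ∈ Submodule.span ℝ (Set.range gfun) := Submodule.subset_span ⟨2, rfl⟩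
    have m3 : gfun 3 ∈ Submodule.span ℝ (Set.range gfun) := Submodule.subset_span ⟨3, rfl⟩
    exact Submodule.add_mem _ (Submodule.add_mem _ (Submodule.add_mem _
      (Submodule.smul_mem _ _ m0) (Submodule.smul_mem _ _ m1))
      (Submodule.smul_mem _ _ m2)) (Submodule.smul_mem _ _ m3)
  | cons x t =>
    have h : (fun v => proc4 ((x :: t) ++ v)) = proc4 (x :: t) • gfun (lst x t) := by
      funext v
      show proc4 (x :: (t ++ v)) = _
      show (1/4) * chain4 x (t ++ v) = _
      rw [chain4_append]
      show _ = ((1/4) * chain4 x t) * chain4 (lst x t) v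
      ring
    rw [h]
    exact Submodule.smul_mem _ _ (Submodule.subset_span ⟨lst x t, rfl⟩)

lemma gfun_mem (x : Fin 4) :
    gfun x ∈ Submodule.span ℝ {f : List (Fin 4) → ℝ | ∃ u : List (Fin 4), f = fun v => proc4 (u ++ v)} := by
  have h : gfun x = (4 : ℝ) • (fun v => proc4 ([x] ++ v)) := by
    funext v
    show chain4 x v = 4 * proc4 (x :: v)
    show chain4 x v = 4 * ((1/4) * chain4 x v)
    ring
  rw [h]
  exact Submodule.smul_mem _ _ (Submodule.subset_span ⟨[x], rfl⟩)

lemma span_eq_gfun :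
    Submodule.span ℝ {f : List (Fin 4) → ℝ | ∃ u : List (Fin 4), f = fun v => proc4 (u ++ v)} =
      Submodule.span ℝ (Set.range gfun) := by
  apply le_antisymm
  · rw [Submodule.span_le]
    rintro f ⟨u, rfl⟩
    exact translate_mem u
  · rw [Submodule.span_le]
    rintro f ⟨x, rfl⟩
    exact gfun_mem x

lemma gfun_li : LinearIndependent ℝ gfun := by
  rw [Fintype.linearIndependent_iff]
  intro c hc
  have h0 := congrFun hc [0]
  have h1 := congrFun hc [1]
  have h2 := congrFun hc [2]
  have h3 := congrFun hc [3]
  simp (config := { decide := true }) [Fin.sum_univ_four, gfun, chain4, q4] at h0 h1 h2 h3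
  intro i
  fin_cases i <;> simp <;> linarith

lemma hankel_rank_proc4 : hankelRank proc4 = ((2 ^ 2 : ℕ) : Cardinal) := by
  unfold hankelRank
  rw [span_eq_gfun, rank_span gfun_li, Cardinal.mk_range_eq gfun gfun_li.injective]
  simp


/-- The "never repeat" process on four symbols is generated by a QHMM of memory
dimension `2`, attaining the lower bound `d ≥ √(Hankel rank)` with equality, since
its Hankel rank is `4 = 2²`. -/
theorem proc4_qubit_generator :
    (∃ M : QHMM (Fin 4) 2, ∀ w : List (Fin 4), M.P w = proc4 w) ∧
    hankelRank proc4 = ((2 ^ 2 : ℕ) : Cardinal) :=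
  ⟨⟨MQ, MQ_gen⟩, hankel_rank_proc4⟩


end
end
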